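/- arXiv:2210.15924 — 3 statements merged into one kernel-verified Lean document; each statement's English description precedes it below -/
import Mathlib

section
/- In the reduced Brown algebra B^A, if u, v ∈ B^A satisfy V_{u,v} = Id (i.e. (uv*)x + (xv*)u − (xu*)v = x for all x), then uv* = 1 + λj and vu* = 1 − λj for some λ ∈ R (where λj = u*v − v*u), and consequently V_{v,u} = Id. -/
/-- The underlying module of the reduced Brown algebra: elements `(r, a, b, s)`
represent the matrix `(r a; b s)`. -/
abbrev Brown (R A : Type*) := R × A × A × R

namespace Brown

variable {R A : Type*} [CommRing R] [AddCommGroup A] [Module R A]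

/-- Multiplication of the reduced Brown algebra `B^A`, given the bilinear trace `T`
and the cross product `cross` of the Albert algebra `A`. -/
def mul (T : A →ₗ[R] A →ₗ[R] R) (cross : A →ₗ[R] A →ₗ[R] A)
    (x y : Brown R A) : Brown R A :=
  (x.1 * y.1 + T x.2.1 y.2.2.1,
   x.1 • y.2.1 + y.2.2.2 • x.2.1 + cross x.2.2.1 y.2.2.1,
   y.1 • x.2.2.1 + x.2.2.2 • y.2.2.1 + cross x.2.1 y.2.1,
   x.2.2.2 * y.2.2.2 + T y.2.1 x.2.2.1)

/-- The involution `(r a; b s)* = (s a; b r)`. -/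
def star (x : Brown R A) : Brown R A := (x.2.2.2, x.2.1, x.2.2.1, x.1)

/-- The identity element `diag(1,1)`. -/
def one : Brown R A := ((1 : R), (0 : A), (0 : A), (1 : R))

/-- The element `e = diag(1,0)`. -/
def e : Brown R A := ((1 : R), (0 : A), (0 : A), (0 : R))

/-- The element `f = diag(0,1)`. -/
def f : Brown R A := ((0 : R), (0 : A), (0 : A), (1 : R))

/-- The element `j = diag(1,-1)`. -/
def jj : Brown R A := ((1 : R), (0 : A), (0 : A), (-1 : R))

/-- The triple product `{x,y,z} = (xy*)z + (zy*)x - (zx*)y`. -/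
def trip (T : A →ₗ[R] A →ₗ[R] R) (cross : A →ₗ[R] A →ₗ[R] A)
    (x y z : Brown R A) : Brown R A :=
  mul T cross (mul T cross x (star y)) z + mul T cross (mul T cross z (star y)) x
    - mul T cross (mul T cross z (star x)) y

/-- The bilinear form `b(x,x') = rs' - r's + T(a,b') - T(a',b)`. -/
def bform (T : A →ₗ[R] A →ₗ[R] R) (x y : Brown R A) : R :=
  x.1 * y.2.2.2 - y.1 * x.2.2.2 + T x.2.1 y.2.2.1 - T y.2.1 x.2.2.1

/-- The quartic form `q(x) = 4rN(a) + 4sN(b) - 4T(a♯,b♯) + (rs - T(a,b))²`. -/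
def qform (N : A → R) (sharp : A → A) (T : A →ₗ[R] A →ₗ[R] R)
    (x : Brown R A) : R :=
  4 * x.1 * N x.2.1 + 4 * x.2.2.2 * N x.2.2.1
    - 4 * T (sharp x.2.1) (sharp x.2.2.1)
    + (x.1 * x.2.2.2 - T x.2.1 x.2.2.1)^2

/-- The full linearization `Θ` of the quartic form `q` (the coefficient of
`t₁t₂t₃t₄` in `q(∑ tᵢxᵢ)`), via inclusion–exclusion. -/
def Theta (N : A → R) (sharp : A → A) (T : A →ₗ[R] A →ₗ[R] R)
    (x₁ x₂ x₃ x₄ : Brown R A) : R :=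
  qform N sharp T (x₁ + x₂ + x₃ + x₄)
    - qform N sharp T (x₁ + x₂ + x₃) - qform N sharp T (x₁ + x₂ + x₄)
    - qform N sharp T (x₁ + x₃ + x₄) - qform N sharp T (x₂ + x₃ + x₄)
    + qform N sharp T (x₁ + x₂) + qform N sharp T (x₁ + x₃)
    + qform N sharp T (x₁ + x₄) + qform N sharp T (x₂ + x₃)
    + qform N sharp T (x₂ + x₄) + qform N sharp T (x₃ + x₄)
    - qform N sharp T x₁ - qform N sharp T x₂ - qform N sharp T x₃ - qform N sharp T x₄

/-- The 4-linear form `Ψ`, defined by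
`2Ψ(x₁,x₂,x₃,x₄) = Θ(x₁,x₂,x₃,x₄) + b(x₁,x₂)b(x₃,x₄) - b(x₁,x₃)b(x₂,x₄) + b(x₁,x₄)b(x₂,x₃)`. -/
def Psi (N : A → R) (sharp : A → A) (T : A →ₗ[R] A →ₗ[R] R) [Invertible (2 : R)]
    (x₁ x₂ x₃ x₄ : Brown R A) : R :=
  ⅟(2 : R) * (Theta N sharp T x₁ x₂ x₃ x₄
    + bform T x₁ x₂ * bform T x₃ x₄ - bform T x₁ x₃ * bform T x₂ x₄
    + bform T x₁ x₄ * bform T x₂ x₃)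

end Brown

variable {R A : Type*} [CommRing R] [AddCommGroup A] [Module R A]

open Brown

/-- if `V_{u,v} = Id` in `B^A`, then `uv* = 1 + λj`, `vu* = 1 - λj`
with `λj = u*v - v*u`, and consequently `V_{v,u} = Id`. -/
theorem brown_conjugate_inverse_symmetric (T : A →ₗ[R] A →ₗ[R] R)
    (cross : A →ₗ[R] A →ₗ[R] A) [Invertible (2 : R)]
    (hT : ∀ a b : A, T a b = T b a) (hc : ∀ a b : A, cross a b = cross b a)
    (u v : Brown R A) (hV : ∀ x : Brown R A, trip T cross u v x = x) :
    ∃ l : R,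
      mul T cross u (star v) = one + l • jj ∧
      mul T cross v (star u) = one - l • jj ∧
      l • (jj : Brown R A) = mul T cross (star u) v - mul T cross (star v) u ∧
      (∀ x : Brown R A, trip T cross v u x = x) := by
  
  obtain ⟨r, a, b, s⟩ := u
  obtain ⟨p, c, d, q⟩ := v
  have h1 := hV Brown.e
  have h2 := hV Brown.f
  simp only [Brown.trip, Brown.mul, Brown.star, Brown.e, Brown.f, Prod.mk.injEq,
    Prod.ext_iff, Prod.fst_add, Prod.snd_add, Prod.fst_sub, Prod.snd_sub] at h1 h2
  simp at h1 h2
  obtain ⟨e1, -, eb⟩ := h1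
  obtain ⟨ea, -, e4⟩ := h2
  set l : R := 2 * (r * q - p * s) with hl
  have hP : mul T cross (r, a, b, s) (star (p, c, d, q)) = one + l • jj := by
    simp only [Brown.mul, Brown.star, Brown.one, Brown.jj, Prod.mk.injEq, Prod.ext_iff,
      Prod.fst_add, Prod.snd_add, Prod.smul_mk, Prod.mk_add_mk, smul_zero, smul_eq_mul,
      add_zero, zero_add]
    refine ⟨by linear_combination e4, ?_, ?_, by linear_combination e1⟩
    · rw [hc b d]; linear_combination (norm := module) ea
    · rw [hc a c]; linear_combination (norm := module) eb
  have hQ : mul T cross (p, c, d, q) (star (r, a, b, s)) = one - l • jj := by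
    simp only [Brown.mul, Brown.star, Brown.one, Brown.jj, Prod.mk.injEq, Prod.ext_iff,
      Prod.fst_sub, Prod.snd_sub, Prod.smul_mk, Prod.mk_sub_mk, smul_zero, smul_eq_mul,
      sub_zero]
    refine ⟨by linear_combination e1, ?_, ?_, by linear_combination e4⟩
    · linear_combination (norm := module) ea
    · linear_combination (norm := module) eb
  refine ⟨l, hP, hQ, ?_, ?_⟩
  · simp only [Brown.mul, Brown.star, Brown.one, Brown.jj, Prod.mk.injEq, Prod.ext_iff,
      Prod.fst_sub, Prod.snd_sub, Prod.smul_mk, Prod.mk_sub_mk, smul_zero, smul_eq_mul]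
    refine ⟨by linear_combination e1 - e4, ?_, ?_, by linear_combination e4 - e1⟩
    · rw [hc b d]; module
    · rw [hc a c]; module
  · have key : ∀ y : Brown R A, mul T cross (one + l • jj) y + mul T cross (one - l • jj) y
        = y + y := by
      rintro ⟨y1, ya, yb, y4⟩
      simp only [Brown.mul, Brown.one, Brown.jj, Prod.smul_mk, Prod.mk_add_mk, Prod.mk_sub_mk,
        smul_eq_mul, smul_zero, zero_smul, sub_zero, sub_self, map_zero, LinearMap.zero_apply, add_zero, zero_add,
        Prod.mk.injEq]
      refine ⟨by ring, by module, by module, by ring⟩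
    intro x
    have h := hV x
    simp only [Brown.trip] at h ⊢
    rw [hP] at h
    rw [hQ]
    rw [show mul T cross (one - l • jj) x
          + mul T cross (mul T cross x (star (r, a, b, s))) (p, c, d, q)
          - mul T cross (mul T cross x (star (p, c, d, q))) (r, a, b, s)
        = (mul T cross (one + l • jj) x + mul T cross (one - l • jj) x)
          - (mul T cross (one + l • jj) x
             + mul T cross (mul T cross x (star (p, c, d, q))) (r, a, b, s)
             - mul T cross (mul T cross x (star (r, a, b, s))) (p, c, d, q)) from by abel,
      key, h]
    abel
end

section
/- Let φ be an automorphism of the reduced Brown algebra B^A (as algebra with involution) fixing j = diag(1,−1) (equivalently, fixing e and f). Then φ has the form (r a; b s) ↦ (r ρ(a); ρ̃(b) s) for linear bijections ρ, ρ̃ : A → A, and necessarily T(ρ(a), ρ̃(b)) = T(a,b) for all a,b (so ρ̃ = ρ†) and T(ρ(a), ρ(b)×ρ(c)) = T(a, b×c) for all a,b,c ∈ A. -/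
variable {R A : Type*} [CommRing R] [AddCommGroup A] [Module R A]

open Brown

/-- an automorphism of `B^A` fixing `j` is of the form
`(r a; b s) ↦ (r ρ(a); ρ̃(b) s)` with `ρ̃ = ρ†` and `ρ` preserving the
trilinear form `T(a, b×c)`. -/
theorem automorphism_fixing_j (T : A →ₗ[R] A →ₗ[R] R) (cross : A →ₗ[R] A →ₗ[R] A)
    [Invertible (2 : R)]
    (hTnd : ∀ a : A, (∀ b : A, T a b = 0) → a = 0)
    (phi : Brown R A →ₗ[R] Brown R A)
    (hbij : Function.Bijective phi)
    (hm : ∀ x y : Brown R A, phi (mul T cross x y) = mul T cross (phi x) (phi y))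
    (hs : ∀ x : Brown R A, phi (star x) = star (phi x))
    (hone : phi (one : Brown R A) = one)
    (hj : phi (jj : Brown R A) = jj) :
    ∃ rho rhot : A →ₗ[R] A,
      Function.Bijective rho ∧ Function.Bijective rhot ∧
      (∀ x : Brown R A, phi x = (x.1, rho x.2.1, rhot x.2.2.1, x.2.2.2)) ∧
      (∀ a b : A, T (rho a) (rhot b) = T a b) ∧
      (∀ a b c : A, T (rho a) (cross (rho b) (rho c)) = T a (cross b c)) := by
  -- phi fixes e and f
  have heq : (e : Brown R A) = ⅟(2:R) • ((one : Brown R A) + jj) := by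
    show ((1:R),(0:A),(0:A),(0:R)) =
      ⅟(2:R) • (((1:R),(0:A),(0:A),(1:R)) + ((1:R),(0:A),(0:A),(-1:R)))
    have : ⅟(2:R) * (1 + 1) = 1 := by
      rw [show (1:R)+1 = 2 from one_add_one_eq_two, invOf_mul_self]
    simp [Prod.ext_iff, smul_eq_mul, this]
  have hfeq : (f : Brown R A) = ⅟(2:R) • ((one : Brown R A) - jj) := by
    show ((0:R),(0:A),(0:A),(1:R)) =
      ⅟(2:R) • (((1:R),(0:A),(0:A),(1:R)) - ((1:R),(0:A),(0:A),(-1:R)))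
    have h1 : ⅟(2:R) * (1 - -1) = 1 := by
      rw [show (1:R) - -1 = 2 by ring, invOf_mul_self]
    have h2 : ⅟(2:R) * (1 + 1) = 1 := by
      rw [show (1:R) + 1 = 2 from one_add_one_eq_two, invOf_mul_self]
    simp [Prod.ext_iff, smul_eq_mul, h1, h2]
  have he : phi (e : Brown R A) = e := by
    rw [heq, map_smul, map_add, hone, hj]
  have hf : phi (f : Brown R A) = f := by
    rw [hfeq, map_smul, map_sub, hone, hj]
  -- structure of phi on the a-component
  have hEa : ∀ a : A, phi ((0:R), a, (0:A), (0:R))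
      = ((0:R), (phi ((0:R), a, (0:A), (0:R))).2.1, (0:A), (0:R)) := by
    intro a
    have h1 : phi ((0:R), a, (0:A), (0:R))
        = mul T cross e (phi ((0:R), a, (0:A), (0:R))) := by
      conv_lhs => rw [show ((0:R), a, (0:A), (0:R))
        = mul T cross e ((0:R), a, (0:A), (0:R)) by
          simp [Brown.mul, Brown.e]]
      rw [hm, he]
    have h2 : phi ((0:R), a, (0:A), (0:R))
        = mul T cross (phi ((0:R), a, (0:A), (0:R))) f := by
      conv_lhs => rw [show ((0:R), a, (0:A), (0:R))
        = mul T cross ((0:R), a, (0:A), (0:R)) f by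
          simp [Brown.mul, Brown.f]]
      rw [hm, hf]
    set y := phi ((0:R), a, (0:A), (0:R)) with hy
    have e1 : y.1 = 0 := by
      have := congrArg Prod.fst h2
      simpa [Brown.mul, Brown.f] using this
    have e3 : y.2.2.1 = 0 := by
      have := congrArg (fun z : Brown R A => z.2.2.1) h1
      simpa [Brown.mul, Brown.e] using this
    have e4 : y.2.2.2 = 0 := by
      have := congrArg (fun z : Brown R A => z.2.2.2) h1
      simpa [Brown.mul, Brown.e] using this
    exact Prod.ext e1 (Prod.ext rfl (Prod.ext e3 e4))
  have hEb : ∀ b : A, phi ((0:R), (0:A), b, (0:R))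
      = ((0:R), (0:A), (phi ((0:R), (0:A), b, (0:R))).2.2.1, (0:R)) := by
    intro b
    have h1 : phi ((0:R), (0:A), b, (0:R))
        = mul T cross f (phi ((0:R), (0:A), b, (0:R))) := by
      conv_lhs => rw [show ((0:R), (0:A), b, (0:R))
        = mul T cross f ((0:R), (0:A), b, (0:R)) by
          simp [Brown.mul, Brown.f]]
      rw [hm, hf]
    have h2 : phi ((0:R), (0:A), b, (0:R))
        = mul T cross (phi ((0:R), (0:A), b, (0:R))) e := by
      conv_lhs => rw [show ((0:R), (0:A), b, (0:R))
        = mul T cross ((0:R), (0:A), b, (0:R)) e by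
          simp [Brown.mul, Brown.e]]
      rw [hm, he]
    set y := phi ((0:R), (0:A), b, (0:R)) with hy
    have e1 : y.1 = 0 := by
      have := congrArg Prod.fst h1
      simpa [Brown.mul, Brown.f] using this
    have e2 : y.2.1 = 0 := by
      have := congrArg (fun z : Brown R A => z.2.1) h2
      simpa [Brown.mul, Brown.e] using this
    have e4 : y.2.2.2 = 0 := by
      have := congrArg (fun z : Brown R A => z.2.2.2) h2
      simpa [Brown.mul, Brown.e] using this
    exact Prod.ext e1 (Prod.ext e2 (Prod.ext rfl e4))
  -- define rho and rhot
  let rho : A →ₗ[R] A :=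
    { toFun := fun a => (phi ((0:R), a, (0:A), (0:R))).2.1
      map_add' := by
        intro a b
        have := phi.map_add ((0:R), a, (0:A), (0:R)) ((0:R), b, (0:A), (0:R))
        have h : ((0:R), a, (0:A), (0:R)) + ((0:R), b, (0:A), (0:R))
            = (((0:R), a + b, (0:A), (0:R)) : Brown R A) := by
          simp [Prod.ext_iff]
        rw [h] at this
        exact congrArg (fun z : Brown R A => z.2.1) this
      map_smul' := by
        intro r a
        have := phi.map_smul r ((0:R), a, (0:A), (0:R))
        have h : r • (((0:R), a, (0:A), (0:R)) : Brown R A)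
            = ((0:R), r • a, (0:A), (0:R)) := by
          simp [Prod.ext_iff, smul_eq_mul]
        rw [h] at this
        exact congrArg (fun z : Brown R A => z.2.1) this }
  let rhot : A →ₗ[R] A :=
    { toFun := fun b => (phi ((0:R), (0:A), b, (0:R))).2.2.1
      map_add' := by
        intro a b
        have := phi.map_add ((0:R), (0:A), a, (0:R)) ((0:R), (0:A), b, (0:R))
        have h : ((0:R), (0:A), a, (0:R)) + ((0:R), (0:A), b, (0:R))
            = (((0:R), (0:A), a + b, (0:R)) : Brown R A) := by
          simp [Prod.ext_iff]
        rw [h] at this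
        exact congrArg (fun z : Brown R A => z.2.2.1) this
      map_smul' := by
        intro r a
        have := phi.map_smul r ((0:R), (0:A), a, (0:R))
        have h : r • (((0:R), (0:A), a, (0:R)) : Brown R A)
            = ((0:R), (0:A), r • a, (0:R)) := by
          simp [Prod.ext_iff, smul_eq_mul]
        rw [h] at this
        exact congrArg (fun z : Brown R A => z.2.2.1) this }
  have hra : ∀ a : A, phi ((0:R), a, (0:A), (0:R)) = ((0:R), rho a, (0:A), (0:R)) :=
    fun a => hEa a
  have hrb : ∀ b : A, phi ((0:R), (0:A), b, (0:R)) = ((0:R), (0:A), rhot b, (0:R)) :=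
    fun b => hEb b
  -- the general form of phi
  have hform : ∀ x : Brown R A, phi x = (x.1, rho x.2.1, rhot x.2.2.1, x.2.2.2) := by
    intro x
    have hx : x = x.1 • (e : Brown R A) + ((0:R), x.2.1, (0:A), (0:R))
        + ((0:R), (0:A), x.2.2.1, (0:R)) + x.2.2.2 • (f : Brown R A) := by
      simp [Brown.e, Brown.f, Prod.ext_iff, smul_eq_mul]
    calc phi x = x.1 • phi (e : Brown R A) + phi ((0:R), x.2.1, (0:A), (0:R))
        + phi ((0:R), (0:A), x.2.2.1, (0:R)) + x.2.2.2 • phi (f : Brown R A) := by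
          conv_lhs => rw [hx]
          simp
      _ = (x.1, rho x.2.1, rhot x.2.2.1, x.2.2.2) := by
          rw [he, hf, hra, hrb]
          simp [Brown.e, Brown.f, Prod.ext_iff, smul_eq_mul]
  -- bijectivity of rho
  have hrho_bij : Function.Bijective rho := by
    constructor
    · intro a b hab
      have : phi ((0:R), a, (0:A), (0:R)) = phi ((0:R), b, (0:A), (0:R)) := by
        rw [hra, hra, hab]
      have := hbij.1 this
      exact (Prod.ext_iff.1 (Prod.ext_iff.1 this).2).1
    · intro a'
      obtain ⟨x, hx⟩ := hbij.2 ((0:R), a', (0:A), (0:R))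
      refine ⟨x.2.1, ?_⟩
      have := hform x
      rw [hx] at this
      exact ((Prod.ext_iff.1 (Prod.ext_iff.1 this).2).1).symm
  have hrhot_bij : Function.Bijective rhot := by
    constructor
    · intro a b hab
      have : phi ((0:R), (0:A), a, (0:R)) = phi ((0:R), (0:A), b, (0:R)) := by
        rw [hrb, hrb, hab]
      have := hbij.1 this
      exact (Prod.ext_iff.1 (Prod.ext_iff.1 (Prod.ext_iff.1 this).2).2).1
    · intro b'
      obtain ⟨x, hx⟩ := hbij.2 ((0:R), (0:A), b', (0:R))
      refine ⟨x.2.2.1, ?_⟩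
      have := hform x
      rw [hx] at this
      exact ((Prod.ext_iff.1 (Prod.ext_iff.1 (Prod.ext_iff.1 this).2).2).1).symm
  -- trace preservation
  have htr : ∀ a b : A, T (rho a) (rhot b) = T a b := by
    intro a b
    have h := hm ((0:R), a, (0:A), (0:R)) ((0:R), (0:A), b, (0:R))
    rw [hra, hrb] at h
    have hmul : mul T cross (((0:R), a, (0:A), (0:R)) : Brown R A)
        ((0:R), (0:A), b, (0:R)) = (T a b, (0:A), (0:A), (0:R)) := by
      simp [Brown.mul, Prod.ext_iff]
    have hmul' : mul T cross (((0:R), rho a, (0:A), (0:R)) : Brown R A)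
        ((0:R), (0:A), rhot b, (0:R)) = (T (rho a) (rhot b), (0:A), (0:A), (0:R)) := by
      simp [Brown.mul, Prod.ext_iff]
    rw [hmul, hmul'] at h
    have := congrArg Prod.fst ((hform _).symm.trans h)
    simpa using this.symm
  -- rhot of cross
  have hcross : ∀ a b : A, rhot (cross a b) = cross (rho a) (rho b) := by
    intro a b
    have h := hm ((0:R), a, (0:A), (0:R)) ((0:R), b, (0:A), (0:R))
    rw [hra, hra] at h
    have hmul : mul T cross (((0:R), a, (0:A), (0:R)) : Brown R A)
        ((0:R), b, (0:A), (0:R)) = ((0:R), (0:A), cross a b, (0:R)) := by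
      simp [Brown.mul, Prod.ext_iff]
    have hmul' : mul T cross (((0:R), rho a, (0:A), (0:R)) : Brown R A)
        ((0:R), rho b, (0:A), (0:R)) = ((0:R), (0:A), cross (rho a) (rho b), (0:R)) := by
      simp [Brown.mul, Prod.ext_iff]
    rw [hmul, hmul', hrb] at h
    exact (Prod.ext_iff.1 (Prod.ext_iff.1 (Prod.ext_iff.1 h).2).2).1
  refine ⟨rho, rhot, hrho_bij, hrhot_bij, hform, htr, ?_⟩
  intro a b c
  rw [← hcross, htr]
end

section
/- In the reduced Brown algebra B^A, the operator U_1 (where U_x y = {x,y,x} and 1 = diag(1,1)) satisfies U_1(x) = x for symmetric elements x (x* = x) and U_1(x) = −3x for skew-symmetric elements x (x* = −x), so U_1 is invertible when 6 ∈ R*. -/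
variable {R A : Type*} [CommRing R] [AddCommGroup A] [Module R A]

open Brown

lemma brown_key (T : A →ₗ[R] A →ₗ[R] R) (cross : A →ₗ[R] A →ₗ[R] A)
    (x : Brown R A) :
    trip T cross one x one = (2 * x.2.2.2 - x.1, x.2.1, x.2.2.1, 2 * x.1 - x.2.2.2) := by
  obtain ⟨r, a, b, s⟩ := x
  simp only [trip, mul, Brown.one, Brown.star, Prod.mk_add_mk, Prod.mk_sub_mk, Prod.mk.injEq,
    map_zero, LinearMap.zero_apply, zero_smul, one_smul, smul_zero, add_zero, zero_add,
    mul_one, one_mul, mul_zero, zero_mul]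
  refine ⟨by ring, by abel, by abel, by ring⟩

/-- `U_1` acts as the identity on symmetric elements of `B^A` and
as multiplication by `-3` on skew-symmetric elements; hence it is bijective
when `6` is invertible. -/
theorem brown_U_one (T : A →ₗ[R] A →ₗ[R] R) (cross : A →ₗ[R] A →ₗ[R] A)
    [Invertible (2 : R)] [Invertible (3 : R)] :
    (∀ x : Brown R A, star x = x → trip T cross one x one = x) ∧
    (∀ x : Brown R A, star x = -x → trip T cross one x one = (-3 : R) • x) ∧
    Function.Bijective (fun x : Brown R A => trip T cross one x one) := by
  have h3 : (⅟(3:R)) * 3 = 1 := invOf_mul_self 3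
  refine ⟨?_, ?_, ?_⟩
  · rintro ⟨r, a, b, s⟩ h
    have hr : s = r := congrArg Prod.fst h
    rw [brown_key]
    simp only [hr]
    ext <;> simp <;> ring
  · rintro ⟨r, a, b, s⟩ h
    have hr : s = -r := congrArg Prod.fst h
    have ha : a = -a := congrArg (fun y : Brown R A => y.2.1) h
    have hb : b = -b := congrArg (fun y : Brown R A => y.2.2.1) h
    have ha0 : a = 0 := by
      have h2 : (2 : R) • a = 0 := by
        rw [two_smul]; nth_rewrite 2 [ha]; exact add_neg_cancel a
      have := congrArg (fun z => (⅟(2:R)) • z) h2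
      simpa [smul_smul] using this
    have hb0 : b = 0 := by
      have h2 : (2 : R) • b = 0 := by
        rw [two_smul]; nth_rewrite 2 [hb]; exact add_neg_cancel b
      have := congrArg (fun z => (⅟(2:R)) • z) h2
      simpa [smul_smul] using this
    rw [brown_key]
    simp only [hr, ha0, hb0]
    ext <;> simp <;> ring
  · refine Function.bijective_iff_has_inverse.mpr
      ⟨fun y => (⅟(3:R)) • (y + star y + star y), ?_, ?_⟩
    · rintro ⟨r, a, b, s⟩
      show (⅟(3:R)) • (trip T cross one (r, a, b, s) one
        + star (trip T cross one (r, a, b, s) one)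
        + star (trip T cross one (r, a, b, s) one)) = (r, a, b, s)
      rw [brown_key]
      simp only [Brown.star, Prod.smul_mk, Prod.mk_add_mk, smul_eq_mul]
      ext
      · show ⅟(3:R) * (2 * s - r + (2 * r - s) + (2 * r - s)) = r
        linear_combination r * h3
      · show (⅟(3:R)) • (a + a + a) = a
        have : a + a + a = (3 : R) • a := by module
        rw [this, smul_smul, h3, one_smul]
      · show (⅟(3:R)) • (b + b + b) = b
        have : b + b + b = (3 : R) • b := by module
        rw [this, smul_smul, h3, one_smul]
      · show ⅟(3:R) * (2 * r - s + (2 * s - r) + (2 * s - r)) = s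
        linear_combination s * h3
    · rintro ⟨r, a, b, s⟩
      show trip T cross one ((⅟(3:R)) • ((r, a, b, s) + star (r, a, b, s)
        + star ((r : R), (a : A), (b : A), (s : R)))) one = (r, a, b, s)
      rw [brown_key]
      simp only [Brown.star, Prod.smul_mk, Prod.mk_add_mk, smul_eq_mul]
      ext
      · show 2 * (⅟(3:R) * (s + r + r)) - ⅟(3:R) * (r + s + s) = r
        linear_combination r * h3
      · show (⅟(3:R)) • (a + a + a) = a
        have : a + a + a = (3 : R) • a := by module
        rw [this, smul_smul, h3, one_smul]
      · show (⅟(3:R)) • (b + b + b) = b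
        have : b + b + b = (3 : R) • b := by module
        rw [this, smul_smul, h3, one_smul]
      · show 2 * (⅟(3:R) * (r + s + s)) - ⅟(3:R) * (s + r + r) = s
        linear_combination s * h3
end
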